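/- Let F be a Banach space of cotype 2 and E any Banach space. Then every γ-summing operator u : E → F is 2-summing, with π₂(u) ≤ C₂(F) · ‖u‖_{R^∞(E;F)}, where C₂(F) is the Rademacher cotype-2 constant of F. -/

import Mathlib

open scoped BigOperators

/-- The set of admissible `p`-summing constants of `u`: nonnegative `c` such that
`∑ ‖u xₙ‖ᵖ ≤ cᵖ · sup_{‖x*‖≤1} ∑ |⟨xₙ, x*⟩|ᵖ` for all finite families. -/
def summingSet (p : ℝ) {E F : Type*} [NormedAddCommGroup E] [NormedSpace ℝ E]
    [NormedAddCommGroup F] [NormedSpace ℝ F] (u : E →L[ℝ] F) : Set ℝ :=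
  {c | 0 ≤ c ∧ ∀ (N : ℕ) (x : Fin N → E),
    ∑ n : Fin N, ‖u (x n)‖ ^ p ≤
      c ^ p * ⨆ g : {g : StrongDual ℝ E // ‖g‖ ≤ 1}, ∑ n : Fin N, |g.1 (x n)| ^ p}

/-- `u` is `p`-summing. -/
def IsPSumming (p : ℝ) {E F : Type*} [NormedAddCommGroup E] [NormedSpace ℝ E]
    [NormedAddCommGroup F] [NormedSpace ℝ F] (u : E →L[ℝ] F) : Prop :=
  (summingSet p u).Nonempty

/-- The `p`-summing norm `π_p(u)` (the least admissible constant). -/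
noncomputable def piNorm (p : ℝ) {E F : Type*} [NormedAddCommGroup E] [NormedSpace ℝ E]
    [NormedAddCommGroup F] [NormedSpace ℝ F] (u : E →L[ℝ] F) : ℝ :=
  sInf (summingSet p u)

open MeasureTheory

/-- Admissible Rademacher-summing constants of `u`. -/
def radSummingSet {Ω : Type*} [MeasurableSpace Ω] (μ : Measure Ω) (r : ℕ → Ω → ℝ)
    {E F : Type*} [NormedAddCommGroup E] [NormedSpace ℝ E]
    [NormedAddCommGroup F] [NormedSpace ℝ F] (u : E →L[ℝ] F) : Set ℝ :=
  {C | 0 ≤ C ∧ ∀ (N : ℕ) (x : Fin N → E),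
    Real.sqrt (∫ ω, ‖∑ n : Fin N, r n ω • u (x n)‖ ^ 2 ∂μ) ≤
      C * ⨆ g : {g : StrongDual ℝ E // ‖g‖ ≤ 1},
            Real.sqrt (∑ n : Fin N, (g.1 (x n)) ^ 2)}

/-- Admissible γ-summing constants of `u` (relative to Gaussian variables `γ`). -/
def gammaSummingSet {Ω : Type*} [MeasurableSpace Ω] (μ : Measure Ω) (γ : ℕ → Ω → ℝ)
    {E F : Type*} [NormedAddCommGroup E] [NormedSpace ℝ E]
    [NormedAddCommGroup F] [NormedSpace ℝ F] (u : E →L[ℝ] F) : Set ℝ :=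
  {C | 0 ≤ C ∧ ∀ (N : ℕ) (x : Fin N → E),
    Real.sqrt (∫ ω, ‖∑ n : Fin N, γ n ω • u (x n)‖ ^ 2 ∂μ) ≤
      C * ⨆ g : {g : StrongDual ℝ E // ‖g‖ ≤ 1},
            Real.sqrt (∑ n : Fin N, (g.1 (x n)) ^ 2)}

/-- Admissible Rademacher cotype-2 constants of `F`. -/
def cotype2Set {Ω : Type*} [MeasurableSpace Ω] (μ : Measure Ω) (r : ℕ → Ω → ℝ)
    (F : Type*) [NormedAddCommGroup F] [NormedSpace ℝ F] : Set ℝ :=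
  {c | 0 ≤ c ∧ ∀ (N : ℕ) (y : Fin N → F),
    Real.sqrt (∑ n : Fin N, ‖y n‖ ^ 2) ≤
      c * Real.sqrt (∫ ω, ‖∑ n : Fin N, r n ω • y n‖ ^ 2 ∂μ)}

/-- Hypotheses making `r` independent Rademacher variables. -/
structure IsRademacherSequence {Ω : Type*} [MeasurableSpace Ω] (μ : Measure Ω)
    (r : ℕ → Ω → ℝ) : Prop where
  meas : ∀ n, Measurable (r n)
  indep : ProbabilityTheory.iIndepFun r μ
  dist : ∀ n, μ (r n ⁻¹' {1}) = 1/2 ∧ μ (r n ⁻¹' {-1}) = 1/2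

/-- Hypotheses making `γ` independent standard Gaussian variables. -/
structure IsGaussianSequence {Ω : Type*} [MeasurableSpace Ω] (μ : Measure Ω)
    (γ : ℕ → Ω → ℝ) : Prop where
  meas : ∀ n, Measurable (γ n)
  indep : ProbabilityTheory.iIndepFun γ μ
  gaussian : ∀ n, Measure.map (γ n) μ = ProbabilityTheory.gaussianReal 0 1

/-!
A standard Gaussian `g` has the law of `ε |g'|`, where `ε` is a Rademacher sign independent of
the Gaussian `g'`. Hence `∑ γₙ yₙ` has the law of `∑ εₙ |γₙ| yₙ`; fixing the signs and applying
Jensen's inequality in the Gaussian moduli (each with mean `E|g|`) gives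
`(E|g|)² E‖∑ εₙ yₙ‖² ≤ E‖∑ γₙ yₙ‖²`. So a `γ`-summing operator is Rademacher-summing with
constant `C / E|g|`. Composing the Rademacher-summing estimate for `u` with the cotype-2
inequality of `F` gives the `2`-summing inequality with constant `c * C` for every admissible
pair `(c, C)`, and passing to infima gives the bound on `π₂(u)`.
-/

open MeasureTheory ProbabilityTheory
open scoped ENNReal

noncomputable def rademacherMeasure : Measure ℝ :=
  (1 / 2 : ℝ≥0∞) • Measure.dirac 1 + (1 / 2 : ℝ≥0∞) • Measure.dirac (-1)

instance : IsProbabilityMeasure rademacherMeasure :=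
  ⟨by simp [rademacherMeasure, ENNReal.inv_two_add_inv_two]⟩

lemma lintegral_rademacherMeasure {f : ℝ → ℝ≥0∞} (hf : Measurable f) :
    ∫⁻ x, f x ∂rademacherMeasure = (1 / 2) * (f 1 + f (-1)) := by
  simp [rademacherMeasure, lintegral_dirac' _ hf, mul_add]

lemma IsRademacherSequence.map_eq {Ω : Type*} [MeasurableSpace Ω] {μ : Measure Ω}
    [IsProbabilityMeasure μ] {r : ℕ → Ω → ℝ} (hr : IsRademacherSequence μ r) (n : ℕ) :
    μ.map (r n) = rademacherMeasure := by
  set ν := μ.map (r n)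
  have hν : ∀ x : ℝ, ν {x} = μ (r n ⁻¹' {x}) := fun x =>
    Measure.map_apply (hr.meas n) (measurableSet_singleton x)
  have hdisj : Disjoint ({1} : Set ℝ) {-1} := by norm_num
  have hsigns : ∀ᵐ x ∂ν, x ∈ ({1} ∪ {-1} : Set ℝ) := by
    have : IsProbabilityMeasure ν := Measure.isProbabilityMeasure_map (hr.meas n).aemeasurable
    refine (prob_compl_eq_zero_iff ((measurableSet_singleton 1).union
      (measurableSet_singleton (-1)))).2 ?_
    rw [measure_union hdisj (measurableSet_singleton _), hν, hν, (hr.dist n).1, (hr.dist n).2,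
      ENNReal.add_halves]
  rw [← Measure.restrict_eq_self_of_ae_mem hsigns, Measure.restrict_union hdisj
    (measurableSet_singleton _), Measure.restrict_singleton, Measure.restrict_singleton, hν, hν,
    (hr.dist n).1, (hr.dist n).2, rademacherMeasure]

lemma map_mul_abs_rademacherMeasure_prod {μ : Measure ℝ} [SFinite μ]
    (hμ : μ.map (fun x => -x) = μ) :
    (rademacherMeasure.prod μ).map (fun p => p.1 * |p.2|) = μ := by
  refine Measure.ext_of_lintegral _ fun f hf => ?_
  have hneg : ∫⁻ x, f (-x) ∂μ = ∫⁻ x, f x ∂μ := by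
    conv_rhs => rw [← hμ]
    rw [lintegral_map hf measurable_neg]
  have habs : ∀ x, f |x| + f (-|x|) = f x + f (-x) := by
    intro x
    rcases le_total 0 x with h | h
    · simp [abs_of_nonneg h]
    · simp [abs_of_nonpos h, add_comm]
  rw [lintegral_map hf (by fun_prop), lintegral_prod_symm _ (by fun_prop)]
  have hrad : ∀ y : ℝ, ∫⁻ x, f (x * |y|) ∂rademacherMeasure = 1 / 2 * (f y + f (-y)) :=
    fun y => by
      rw [lintegral_rademacherMeasure (f := fun x => f (x * |y|)) (by fun_prop), one_mul,
        neg_one_mul, habs]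
  simp only [hrad]
  rw [lintegral_const_mul _ (by fun_prop), lintegral_add_left hf, hneg, ← two_mul, ← mul_assoc,
    one_div, ENNReal.inv_mul_cancel two_ne_zero ENNReal.ofNat_ne_top, one_mul]

section Comparison

variable {ι : Type*} [Fintype ι] {F : Type*} [NormedAddCommGroup F] [NormedSpace ℝ F]

lemma map_mul_abs_pi_rademacherMeasure_prod {μ : Measure ℝ} [SigmaFinite μ]
    (hμ : μ.map (fun x => -x) = μ) :
    ((Measure.pi fun _ : ι => rademacherMeasure).prod (Measure.pi fun _ : ι => μ)).map
      (fun p i => p.1 i * |p.2 i|) = Measure.pi fun _ : ι => μ := by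
  have h₁ := map_mul_abs_rademacherMeasure_prod hμ
  have : SigmaFinite ((rademacherMeasure.prod μ).map (fun p => p.1 * |p.2|)) := by
    rw [h₁]; infer_instance
  rw [← (measurePreserving_arrowProdEquivProdArrow ℝ ℝ ι _ _).map_eq,
    Measure.map_map (by fun_prop) (MeasurableEquiv.measurable _)]
  exact (Measure.pi_map_pi (μ := fun _ => rademacherMeasure.prod μ)
    (f := fun _ p => p.1 * |p.2|) (fun _ => by fun_prop)).trans (by rw [h₁])

lemma memLp_sum_smul {α : Type*} [MeasurableSpace α] {μ : Measure α} {p : ℝ≥0∞}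
    {f : ι → α → ℝ} (hf : ∀ i, MemLp (f i) p μ) (y : ι → F) :
    MemLp (fun a => ∑ i, f i a • y i) p μ :=
  memLp_finsetSum _ fun i _ => (memLp_top_const (y i)).smul (hf i)

variable {μ : Measure ℝ} [IsProbabilityMeasure μ]

lemma sq_integral_abs_mul_norm_sq_le (hμ : MemLp id 2 μ) (ε : ι → ℝ) (y : ι → F) :
    (∫ x, |x| ∂μ) ^ 2 * ‖∑ i, ε i • y i‖ ^ 2 ≤
      ∫ t, ‖∑ i, (ε i * |t i|) • y i‖ ^ 2 ∂(Measure.pi fun _ => μ) := by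
  obtain ⟨φ, hφ, hφv⟩ := exists_dual_vector'' ℝ (∑ i, ε i • y i)
  replace hφv : φ (∑ i, ε i • y i) = ‖∑ i, ε i • y i‖ := hφv
  have habs : ∀ i, MemLp (fun t : ι → ℝ => ε i * |t i|) 2 (Measure.pi fun _ => μ) :=
    fun i => ((hμ.comp_measurePreserving (measurePreserving_eval _ i)).abs).const_mul (ε i)
  set X : (ι → ℝ) → ℝ := fun t => ∑ i, (ε i * |t i|) * φ (y i)
  have hX : MemLp X 2 (Measure.pi fun _ => μ) :=
    memLp_finsetSum _ fun i _ => (habs i).mul_const _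
  have hEX : ∫ t, X t ∂(Measure.pi fun _ => μ) = (∫ x, |x| ∂μ) * ‖∑ i, ε i • y i‖ := by
    rw [integral_finsetSum _ fun i _ => ((habs i).integrable one_le_two).mul_const _, ← hφv,
      map_sum, Finset.mul_sum]
    refine Finset.sum_congr rfl fun i _ => ?_
    rw [integral_mul_const, integral_const_mul,
      integral_comp_eval (μ := fun _ : ι => μ) (f := fun x : ℝ => |x|) (by fun_prop), map_smul,
      smul_eq_mul]
    ring
  have hXw : ∀ t, X t ^ 2 ≤ ‖∑ i, (ε i * |t i|) • y i‖ ^ 2 := by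
    intro t
    have hXφ : X t = φ (∑ i, (ε i * |t i|) • y i) := by simp [X, map_sum, map_smul]
    rw [hXφ, ← sq_abs, ← Real.norm_eq_abs]
    exact pow_le_pow_left₀ (norm_nonneg _)
      ((φ.le_of_opNorm_le hφ _).trans_eq (one_mul _)) 2
  calc (∫ x, |x| ∂μ) ^ 2 * ‖∑ i, ε i • y i‖ ^ 2 = (∫ t, X t ∂(Measure.pi fun _ => μ)) ^ 2 := by
        rw [hEX, mul_pow]
    _ ≤ ∫ t, X t ^ 2 ∂(Measure.pi fun _ => μ) := by
        have := variance_nonneg X (Measure.pi fun _ => μ)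
        rw [variance_eq_sub hX] at this
        simpa using this
    _ ≤ ∫ t, ‖∑ i, (ε i * |t i|) • y i‖ ^ 2 ∂(Measure.pi fun _ => μ) :=
        integral_mono hX.integrable_sq
          ((memLp_sum_smul habs y).integrable_norm_pow two_ne_zero) hXw

lemma sq_integral_abs_mul_integral_pi_rademacherMeasure_le (hsymm : μ.map (fun x => -x) = μ)
    (hμ : MemLp id 2 μ) (y : ι → F) :
    (∫ x, |x| ∂μ) ^ 2 * ∫ ε, ‖∑ i, ε i • y i‖ ^ 2 ∂(Measure.pi fun _ => rademacherMeasure) ≤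
      ∫ t, ‖∑ i, t i • y i‖ ^ 2 ∂(Measure.pi fun _ => μ) := by
  set Φ : (ι → ℝ) → ℝ := fun t => ‖∑ i, t i • y i‖ ^ 2
  set mix : (ι → ℝ) × (ι → ℝ) → ι → ℝ := fun p i => p.1 i * |p.2 i|
  have hmix : Measurable mix := by fun_prop
  have hmap := map_mul_abs_pi_rademacherMeasure_prod (ι := ι) hsymm
  have hΦ : Integrable Φ (Measure.pi fun _ => μ) :=
    (memLp_sum_smul (fun i => hμ.comp_measurePreserving (measurePreserving_eval _ i)) y)
      |>.integrable_norm_pow two_ne_zero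
  have hΦmap : Integrable Φ
      (((Measure.pi fun _ => rademacherMeasure).prod (Measure.pi fun _ => μ)).map mix) := by
    rw [hmap]; exact hΦ
  have hΦmix := hΦmap.comp_measurable hmix
  calc (∫ x, |x| ∂μ) ^ 2 * ∫ ε, Φ ε ∂(Measure.pi fun _ => rademacherMeasure)
      = ∫ ε, (∫ x, |x| ∂μ) ^ 2 * Φ ε ∂(Measure.pi fun _ => rademacherMeasure) :=
        (integral_const_mul _ _).symm
    _ ≤ ∫ ε, ∫ t, Φ (mix (ε, t)) ∂(Measure.pi fun _ => μ)
          ∂(Measure.pi fun _ => rademacherMeasure) :=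
        integral_mono_of_nonneg (ae_of_all _ fun ε => by positivity) hΦmix.integral_prod_left
          (ae_of_all _ fun ε => sq_integral_abs_mul_norm_sq_le hμ ε y)
    _ = ∫ p, Φ (mix p) ∂((Measure.pi fun _ => rademacherMeasure).prod (Measure.pi fun _ => μ)) :=
        (integral_prod _ hΦmix).symm
    _ = ∫ t, Φ t ∂(Measure.pi fun _ => μ) := by
        rw [← integral_map hmix.aemeasurable hΦmap.1, hmap]

end Comparison

lemma ProbabilityTheory.iIndepFun.map_fin_eq_pi {Ω β : Type*} [MeasurableSpace Ω]
    [MeasurableSpace β] {μ : Measure Ω} [IsProbabilityMeasure μ] {X : ℕ → Ω → β}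
    (hX : ∀ n, Measurable (X n)) (hind : iIndepFun X μ) {ν : Measure β}
    (hν : ∀ n, μ.map (X n) = ν) (N : ℕ) :
    μ.map (fun ω (n : Fin N) => X n ω) = Measure.pi fun _ => ν := by
  rw [iIndepFun.map_fun_eq_pi_map (fun n : Fin N => (hX n).aemeasurable)
    (hind.precomp Fin.val_injective)]
  simp only [hν]

lemma integral_norm_sum_smul_sq_eq_pi {Ω F : Type*} [MeasurableSpace Ω] [NormedAddCommGroup F]
    [NormedSpace ℝ F] {μ : Measure Ω} [IsProbabilityMeasure μ] {X : ℕ → Ω → ℝ}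
    (hX : ∀ n, Measurable (X n)) (hind : iIndepFun X μ) {ν : Measure ℝ}
    (hν : ∀ n, μ.map (X n) = ν) {N : ℕ} (y : Fin N → F) :
    ∫ ω, ‖∑ n : Fin N, X n ω • y n‖ ^ 2 ∂μ =
      ∫ t, ‖∑ n, t n • y n‖ ^ 2 ∂(Measure.pi fun _ => ν) := by
  rw [← hind.map_fin_eq_pi hX hν N, integral_map (by fun_prop)
    (Continuous.aestronglyMeasurable (by fun_prop))]

lemma integral_abs_gaussianReal_pos : 0 < ∫ x, |x| ∂gaussianReal 0 1 := by
  rw [integral_pos_iff_support_of_nonneg abs_nonneg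
    ((memLp_id_gaussianReal 1).integrable le_rfl).abs]
  have hsupp : Function.support (fun x : ℝ => |x|) = {0}ᶜ := by ext; simp
  have := nullSingletonClass_gaussianReal (μ := 0) one_ne_zero
  rw [hsupp, prob_compl_eq_one_iff (measurableSet_singleton 0) |>.2 (measure_singleton 0)]
  exact one_pos

lemma sq_integral_abs_gaussianReal_mul_rademacher_le_gaussian {Ω₁ Ω₂ F : Type*}
    [MeasurableSpace Ω₁] [MeasurableSpace Ω₂] [NormedAddCommGroup F] [NormedSpace ℝ F]
    {μ₁ : Measure Ω₁} [IsProbabilityMeasure μ₁] {μ₂ : Measure Ω₂} [IsProbabilityMeasure μ₂]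
    {r : ℕ → Ω₁ → ℝ} (hr : IsRademacherSequence μ₁ r)
    {γ : ℕ → Ω₂ → ℝ} (hγ : IsGaussianSequence μ₂ γ) {N : ℕ} (y : Fin N → F) :
    (∫ x, |x| ∂gaussianReal 0 1) ^ 2 * ∫ ω, ‖∑ n : Fin N, r n ω • y n‖ ^ 2 ∂μ₁ ≤
      ∫ ω, ‖∑ n : Fin N, γ n ω • y n‖ ^ 2 ∂μ₂ := by
  rw [integral_norm_sum_smul_sq_eq_pi hr.meas hr.indep hr.map_eq,
    integral_norm_sum_smul_sq_eq_pi hγ.meas hγ.indep hγ.gaussian]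
  exact sq_integral_abs_mul_integral_pi_rademacherMeasure_le
    (by simpa using gaussianReal_map_neg (μ := 0) (v := 1)) (memLp_id_gaussianReal 2) y

lemma Real.sInf_le_sInf_mul_sInf {S A B : Set ℝ} (hS : BddBelow S) (hA : A.Nonempty)
    (hB : B.Nonempty) (hA₀ : ∀ a ∈ A, 0 ≤ a) (hB₀ : ∀ b ∈ B, 0 ≤ b)
    (hmul : ∀ a ∈ A, ∀ b ∈ B, a * b ∈ S) : sInf S ≤ sInf A * sInf B := by
  have hA_le : ∀ a ∈ A, sInf S ≤ a * sInf B := fun a ha => by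
    rw [← smul_eq_mul, ← Real.sInf_smul_of_nonneg (hA₀ a ha)]
    exact csInf_le_csInf hS hB.smul_set (by rintro _ ⟨b, hb, rfl⟩; exact hmul a ha b hb)
  rw [mul_comm, ← smul_eq_mul, ← Real.sInf_smul_of_nonneg (Real.sInf_nonneg hB₀)]
  refine le_csInf hA.smul_set ?_
  rintro _ ⟨a, ha, rfl⟩
  exact (hA_le a ha).trans_eq (mul_comm _ _)

lemma Real.ciSup_sqrt {ι : Sort*} [Nonempty ι] {f : ι → ℝ} (hf : BddAbove (Set.range f)) :
    ⨆ i, √(f i) = √(⨆ i, f i) :=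
  (Monotone.map_ciSup_of_continuousAt Real.continuous_sqrt.continuousAt
    (fun _ _ h => Real.sqrt_le_sqrt h) hf).symm

section SummingOperators

variable {E F : Type*} [NormedAddCommGroup E] [NormedSpace ℝ E]
  [NormedAddCommGroup F] [NormedSpace ℝ F]

instance : Nonempty {g : StrongDual ℝ E // ‖g‖ ≤ 1} := ⟨⟨0, by simp⟩⟩

lemma bddAbove_range_sum_sq_dual {N : ℕ} (x : Fin N → E) :
    BddAbove (Set.range fun g : {g : StrongDual ℝ E // ‖g‖ ≤ 1} => ∑ n, (g.1 (x n)) ^ 2) := by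
  refine ⟨∑ n, ‖x n‖ ^ 2, ?_⟩
  rintro _ ⟨g, rfl⟩
  refine Finset.sum_le_sum fun n _ => ?_
  rw [← sq_abs, ← Real.norm_eq_abs]
  exact pow_le_pow_left₀ (norm_nonneg _) ((g.1.le_of_opNorm_le g.2 _).trans_eq (one_mul _)) 2

lemma mul_mem_summingSet_two {Ω : Type*} [MeasurableSpace Ω] {μ : Measure Ω} {r : ℕ → Ω → ℝ}
    {u : E →L[ℝ] F} {c C : ℝ} (hc : c ∈ cotype2Set μ r F) (hC : C ∈ radSummingSet μ r u) :
    c * C ∈ summingSet 2 u := by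
  obtain ⟨hc₀, hc⟩ := hc
  obtain ⟨hC₀, hC⟩ := hC
  refine ⟨mul_nonneg hc₀ hC₀, fun N x => ?_⟩
  set S := ⨆ g : {g : StrongDual ℝ E // ‖g‖ ≤ 1}, ∑ n : Fin N, (g.1 (x n)) ^ 2
  have hS : 0 ≤ S := le_ciSup_of_le (bddAbove_range_sum_sq_dual x) ⟨0, by simp⟩ (by simp)
  have hsqrt : √(∑ n : Fin N, ‖u (x n)‖ ^ 2) ≤ c * C * √S := by
    calc √(∑ n : Fin N, ‖u (x n)‖ ^ 2)
        ≤ c * √(∫ ω, ‖∑ n : Fin N, r n ω • u (x n)‖ ^ 2 ∂μ) := hc N fun n => u (x n)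
      _ ≤ c * (C * √S) := by
          rw [← Real.ciSup_sqrt (bddAbove_range_sum_sq_dual x)]
          exact mul_le_mul_of_nonneg_left (hC N x) hc₀
      _ = c * C * √S := (mul_assoc _ _ _).symm
  have hsq := pow_le_pow_left₀ (Real.sqrt_nonneg _) hsqrt 2
  rw [Real.sq_sqrt (by positivity), mul_pow, Real.sq_sqrt hS] at hsq
  simpa only [Real.rpow_two, sq_abs] using hsq

lemma div_mem_radSummingSet {Ω₁ Ω₂ : Type*} [MeasurableSpace Ω₁] [MeasurableSpace Ω₂]
    {μ₁ : Measure Ω₁} [IsProbabilityMeasure μ₁] {μ₂ : Measure Ω₂} [IsProbabilityMeasure μ₂]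
    {r : ℕ → Ω₁ → ℝ} (hr : IsRademacherSequence μ₁ r)
    {γ : ℕ → Ω₂ → ℝ} (hγ : IsGaussianSequence μ₂ γ) {u : E →L[ℝ] F} {C : ℝ}
    (hC : C ∈ gammaSummingSet μ₂ γ u) :
    C / ∫ x, |x| ∂gaussianReal 0 1 ∈ radSummingSet μ₁ r u := by
  obtain ⟨hC₀, hC⟩ := hC
  set m := ∫ x, |x| ∂gaussianReal 0 1
  have hm : 0 < m := integral_abs_gaussianReal_pos
  refine ⟨div_nonneg hC₀ hm.le, fun N x => ?_⟩
  have hcomp := sq_integral_abs_gaussianReal_mul_rademacher_le_gaussian hr hγ fun n => u (x n)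
  calc √(∫ ω, ‖∑ n : Fin N, r n ω • u (x n)‖ ^ 2 ∂μ₁)
      ≤ √(∫ ω, ‖∑ n : Fin N, γ n ω • u (x n)‖ ^ 2 ∂μ₂) / m := by
        rw [le_div_iff₀ hm, ← Real.sqrt_sq hm.le, ← Real.sqrt_mul' _ (sq_nonneg m), mul_comm]
        exact Real.sqrt_le_sqrt hcomp
    _ ≤ C * (⨆ g : {g : StrongDual ℝ E // ‖g‖ ≤ 1}, √(∑ n : Fin N, (g.1 (x n)) ^ 2)) / m :=
        div_le_div_of_nonneg_right (hC N x) hm.le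
    _ = C / m * ⨆ g : {g : StrongDual ℝ E // ‖g‖ ≤ 1}, √(∑ n : Fin N, (g.1 (x n)) ^ 2) :=
        mul_div_right_comm _ _ _

end SummingOperators

theorem gammaSumming_two_summing_of_cotype2_general
    {Ω₁ Ω₂ : Type*} [MeasurableSpace Ω₁] [MeasurableSpace Ω₂]
    (μ₁ : Measure Ω₁) [IsProbabilityMeasure μ₁] (μ₂ : Measure Ω₂) [IsProbabilityMeasure μ₂]
    (r : ℕ → Ω₁ → ℝ) (hr : IsRademacherSequence μ₁ r)
    (γ : ℕ → Ω₂ → ℝ) (hγ : IsGaussianSequence μ₂ γ)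
    {E F : Type*} [NormedAddCommGroup E] [NormedSpace ℝ E]
    [NormedAddCommGroup F] [NormedSpace ℝ F]
    (hcot : (cotype2Set μ₁ r F).Nonempty)
    (u : E →L[ℝ] F) (hu : (gammaSummingSet μ₂ γ u).Nonempty) :
    IsPSumming 2 u ∧
      piNorm 2 u ≤ sInf (cotype2Set μ₁ r F) * sInf (radSummingSet μ₁ r u) := by
  obtain ⟨c, hc⟩ := hcot
  obtain ⟨Cγ, hCγ⟩ := hu
  have hrad := div_mem_radSummingSet hr hγ hCγ
  exact ⟨⟨_, mul_mem_summingSet_two hc hrad⟩,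
    Real.sInf_le_sInf_mul_sInf ⟨0, fun _ h => h.1⟩ ⟨c, hc⟩ ⟨_, hrad⟩ (fun _ h => h.1)
      (fun _ h => h.1) fun _ ha _ hb => mul_mem_summingSet_two ha hb⟩

/-- If `F` has cotype 2, every `γ`-summing operator `u : E → F` is `2`-summing with
`π₂(u) ≤ C₂(F) · ‖u‖_{R^∞(E;F)}`. -/
theorem gammaSumming_two_summing_of_cotype2
    {Ω₁ Ω₂ : Type*} [MeasurableSpace Ω₁] [MeasurableSpace Ω₂]
    (μ₁ : Measure Ω₁) [IsProbabilityMeasure μ₁] (μ₂ : Measure Ω₂) [IsProbabilityMeasure μ₂]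
    (r : ℕ → Ω₁ → ℝ) (hr : IsRademacherSequence μ₁ r)
    (γ : ℕ → Ω₂ → ℝ) (hγ : IsGaussianSequence μ₂ γ)
    {E F : Type*} [NormedAddCommGroup E] [NormedSpace ℝ E] [CompleteSpace E]
    [NormedAddCommGroup F] [NormedSpace ℝ F] [CompleteSpace F]
    (hcot : (cotype2Set μ₁ r F).Nonempty)
    (u : E →L[ℝ] F) (hu : (gammaSummingSet μ₂ γ u).Nonempty) :
    IsPSumming 2 u ∧
      piNorm 2 u ≤ sInf (cotype2Set μ₁ r F) * sInf (radSummingSet μ₁ r u) :=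
  gammaSumming_two_summing_of_cotype2_general μ₁ μ₂ r hr γ hγ hcot u hu
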